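/- arXiv:2401.00807 — 7 statements merged into one kernel-verified Lean document; each statement's English description precedes it below -/
import Mathlib

section
/- Let n and k be positive integers such that k divides n(n+1)/2, and let P = [p_1, …, p_k] be an ascending partition of n of size k. If P is equitable, then for every j with 1 ≤ j ≤ k it holds that Σ_{i=1}^{p_1+⋯+p_j} (n − i + 1) − j·s^{n,k} ≥ 0. -/
/-- `s^{n,k} = n(n+1)/(2k)`. -/
def sNK (n k : ℕ) : ℕ := n * (n + 1) / (2 * k)

/-- `slack_j(P) = Σ_{i=1}^{p_1+⋯+p_j} (n − i + 1) − j·s^{n,k}`. -/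
def slack (n k : ℕ) (p : ℕ → ℕ) (j : ℕ) : ℤ :=
  (∑ i ∈ Finset.Icc 1 (∑ t ∈ Finset.Icc 1 j, p t), ((n : ℤ) - (i : ℤ) + 1))
    - (j : ℤ) * (sNK n k : ℤ)

/-- `p` (on indices `1,…,k`) is an ascending partition of `n` of size `k`. -/
def IsAscPartition (n k : ℕ) (p : ℕ → ℕ) : Prop :=
  (∀ i, 1 ≤ i → i ≤ k → 1 ≤ p i) ∧
  (∀ i j, 1 ≤ i → i ≤ j → j ≤ k → p i ≤ p j) ∧
  ∑ i ∈ Finset.Icc 1 k, p i = n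

/-- `p` is equitable: `{1,…,n}` partitions into sets `A_1,…,A_k` with `|A_i| = p_i`
and each element sum equal to `s^{n,k}`. -/
def Equitable (n k : ℕ) (p : ℕ → ℕ) : Prop :=
  ∃ A : ℕ → Finset ℕ,
    (∀ i j, 1 ≤ i → i < j → j ≤ k → Disjoint (A i) (A j)) ∧
    (Finset.Icc 1 k).biUnion A = Finset.Icc 1 n ∧
    (∀ i, 1 ≤ i → i ≤ k → (A i).card = p i) ∧
    (∀ i, 1 ≤ i → i ≤ k → ∑ x ∈ A i, x = sNK n k)

/-!
The first `j` blocks `A_1, …, A_j` of an equitable partition form a set of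
`p_1 + ⋯ + p_j` elements of `{1, …, n}` with sum `j · s^{n,k}`, while `m` distinct
elements of `{1, …, n}` sum to at most `n + (n - 1) + ⋯ + (n - m + 1)`, the sum of the
`m` largest ones.
-/

open Finset

lemma sum_le_sum_range_sub_of_subset_Icc (n : ℕ) {B : Finset ℕ} (hB : B ⊆ Icc 1 n) :
    ∑ x ∈ B, (x : ℤ) ≤ ∑ i ∈ range #B, ((n : ℤ) - i) := by
  induction n generalizing B with
  | zero => simp [subset_empty.mp (by simpa using hB)]
  | succ n ih =>
    by_cases htop : n + 1 ∈ B
    · have hrest : B.erase (n + 1) ⊆ Icc 1 n := fun x hx => by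
        have := mem_Icc.mp (hB (mem_of_mem_erase hx))
        have := ne_of_mem_erase hx
        exact mem_Icc.mpr (by omega)
      rw [← insert_erase htop, sum_insert (notMem_erase _ _),
        card_insert_of_notMem (notMem_erase _ _), sum_range_succ']
      have hshift (i : ℕ) : ((n + 1 : ℕ) : ℤ) - ((i + 1 : ℕ) : ℤ) = n - i := by push_cast; ring
      simp only [hshift]
      push_cast
      linarith [ih hrest]
    · have hrest : B ⊆ Icc 1 n := fun x hx => by
        have := mem_Icc.mp (hB hx)
        have : x ≠ n + 1 := fun h => htop (h ▸ hx)
        exact mem_Icc.mpr (by omega)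
      calc ∑ x ∈ B, (x : ℤ) ≤ ∑ i ∈ range #B, ((n : ℤ) - i) := ih hrest
        _ ≤ ∑ i ∈ range #B, (((n + 1 : ℕ) : ℤ) - i) :=
          sum_le_sum fun i _ => by push_cast; linarith

lemma sum_Icc_sub_add_one_eq_sum_range (n s : ℕ) :
    ∑ i ∈ Icc 1 s, ((n : ℤ) - i + 1) = ∑ i ∈ range s, ((n : ℤ) - i) := by
  induction s with
  | zero => simp
  | succ s ih =>
    rw [sum_Icc_succ_top (by omega), ih, sum_range_succ]
    push_cast
    ring

lemma Equitable.exists_subset_card_eq_sum_eq {n k : ℕ} {p : ℕ → ℕ} (hEq : Equitable n k p)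
    {j : ℕ} (hjk : j ≤ k) :
    ∃ B ⊆ Icc 1 n, #B = ∑ t ∈ Icc 1 j, p t ∧ ∑ x ∈ B, x = j * sNK n k := by
  obtain ⟨A, hdisj, hcover, hcard, hsum⟩ := hEq
  have hpairwise : (Icc 1 j : Set ℕ).PairwiseDisjoint A := by
    intro i hi i' hi' hne
    simp only [coe_Icc, Set.mem_Icc] at hi hi'
    rcases hne.lt_or_gt with h | h
    · exact hdisj i i' hi.1 h (hi'.2.trans hjk)
    · exact (hdisj i' i hi'.1 h (hi.2.trans hjk)).symm
  refine ⟨(Icc 1 j).biUnion A, ?_, ?_, ?_⟩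
  · rw [← hcover]
    exact biUnion_subset_biUnion_of_subset_left A (Icc_subset_Icc_right hjk)
  · rw [card_biUnion hpairwise]
    exact sum_congr rfl fun i hi =>
      hcard i (mem_Icc.mp hi).1 ((mem_Icc.mp hi).2.trans hjk)
  · rw [sum_biUnion hpairwise, sum_congr rfl fun i hi =>
      hsum i (mem_Icc.mp hi).1 ((mem_Icc.mp hi).2.trans hjk)]
    simp

theorem statement0_general (n k : ℕ) (p : ℕ → ℕ) (hEq : Equitable n k p) :
    ∀ j, 1 ≤ j → j ≤ k → 0 ≤ slack n k p j := by
  intro j _ hjk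
  obtain ⟨B, hBsub, hBcard, hBsum⟩ := hEq.exists_subset_card_eq_sum_eq hjk
  have hbound := sum_le_sum_range_sub_of_subset_Icc n hBsub
  rw [hBcard, ← Nat.cast_sum, hBsum] at hbound
  rw [slack, sum_Icc_sub_add_one_eq_sum_range]
  push_cast at hbound
  linarith

theorem statement0 (n k : ℕ) (hn : 0 < n) (hk : 0 < k)
    (hdvd : k ∣ n * (n + 1) / 2) (p : ℕ → ℕ)
    (hP : IsAscPartition n k p) (hEq : Equitable n k p) :
    ∀ j, 1 ≤ j → j ≤ k → 0 ≤ slack n k p j :=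
  statement0_general n k p hEq
end

section
/- Each of the three ascending partitions [2^9, 3^2, 5, 10], [2^9, 3^2, 6, 9], and [2^9, 3^2, 7, 8] of n = 39 into k = 13 parts satisfies the slack condition (slack_j(P) ≥ 0 for all 1 ≤ j ≤ 12, where s^{39,13} = 60) but is not equitable: the set {1, …, 39} cannot be partitioned into subsets of those sizes all having element sum 60. -/
/-- The partition `[2^9, 3^2, 5, 10]` of 39 into 13 parts. -/
def pA : ℕ → ℕ := fun i => if i ≤ 9 then 2 else if i ≤ 11 then 3 else if i ≤ 12 then 5 else 10

/-- The partition `[2^9, 3^2, 6, 9]` of 39 into 13 parts. -/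
def pB : ℕ → ℕ := fun i => if i ≤ 9 then 2 else if i ≤ 11 then 3 else if i ≤ 12 then 6 else 9

/-- The partition `[2^9, 3^2, 7, 8]` of 39 into 13 parts. -/
def pC : ℕ → ℕ := fun i => if i ≤ 9 then 2 else if i ≤ 11 then 3 else if i ≤ 12 then 7 else 8

open Finset

def nineTwosTwoThrees (a b : ℕ) : ℕ → ℕ :=
  fun i => if i ≤ 9 then 2 else if i ≤ 11 then 3 else if i ≤ 12 then a else b

lemma isAscPartition_nineTwosTwoThrees {a b : ℕ} (ha : 3 ≤ a) (hab : a ≤ b) (hsum : a + b = 15) :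
    IsAscPartition 39 13 (nineTwosTwoThrees a b) := by
  refine ⟨fun i _ _ => ?_, fun i j _ _ _ => ?_, ?_⟩
  · unfold nineTwosTwoThrees; split_ifs <;> omega
  · unfold nineTwosTwoThrees; split_ifs <;> omega
  · simp only [sum_Icc_succ_top, Nat.le_add_left, Icc_self, sum_singleton, nineTwosTwoThrees]
    norm_num
    omega

lemma Equitable.exists_pairwiseDisjoint {n k : ℕ} {p : ℕ → ℕ} (h : Equitable n k p) :
    ∃ A : ℕ → Finset ℕ, (Icc 1 k : Set ℕ).PairwiseDisjoint A ∧
      ∀ i ∈ Icc 1 k, A i ⊆ Icc 1 n ∧ #(A i) = p i ∧ ∑ x ∈ A i, x = sNK n k := by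
  obtain ⟨A, hdisj, hcover, hcard, hsum⟩ := h
  refine ⟨A, fun i hi j hj hij => ?_, fun i hi => ⟨?_, ?_, ?_⟩⟩
  · rw [coe_Icc, Set.mem_Icc] at hi hj
    rcases hij.lt_or_gt with h | h
    · exact hdisj i j hi.1 h hj.2
    · exact (hdisj j i hj.1 h hi.2).symm
  · rw [← hcover]; exact subset_biUnion_of_mem A hi
  · rw [mem_Icc] at hi; exact hcard i hi.1 hi.2
  · rw [mem_Icc] at hi; exact hsum i hi.1 hi.2

lemma sum_card_inter_le_card {ι α : Type*} [DecidableEq α] {I : Finset ι} {A : ι → Finset α}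
    (hA : (I : Set ι).PairwiseDisjoint A) (T : Finset α) : ∑ i ∈ I, #(A i ∩ T) ≤ #T := by
  rw [← card_biUnion (hA.mono fun i => inter_subset_left)]
  exact card_le_card (biUnion_subset.2 fun i _ => inter_subset_right)

lemma subset_Icc_sub_of_card_eq_two {s : Finset ℕ} {n S : ℕ} (hs : s ⊆ Icc 1 n) (hcard : #s = 2)
    (hsum : ∑ x ∈ s, x = S) : s ⊆ Icc (S - n) n := by
  obtain ⟨x, y, hxy, rfl⟩ := card_eq_two.1 hcard
  rw [sum_pair hxy] at hsum
  have hx := mem_Icc.1 (hs (mem_insert_self x {y}))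
  have hy := mem_Icc.1 (hs (mem_insert_of_mem (mem_singleton_self y)))
  intro z hz
  rw [mem_insert, mem_singleton] at hz
  rw [mem_Icc]
  omega

lemma sum_add_three_le_of_card_eq_three {s : Finset ℕ} {m : ℕ} (hcard : #s = 3)
    (hs : ∀ x ∈ s, x ≤ m) : ∑ x ∈ s, x + 3 ≤ 3 * m := by
  obtain ⟨x, y, z, hxy, hxz, hyz, rfl⟩ := card_eq_three.1 hcard
  rw [sum_insert (by simp [hxy, hxz]), sum_pair hyz]
  have := hs x (by simp)
  have := hs y (by simp)
  have := hs z (by simp)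
  omega

lemma inter_Icc_nonempty_of_card_eq_three {s : Finset ℕ} {m n : ℕ} (hs : s ⊆ Icc 1 n)
    (hcard : #s = 3) (hsum : 3 * m < ∑ x ∈ s, x + 3) : (s ∩ Icc (m + 1) n).Nonempty := by
  by_contra hT
  have hsmall : ∀ x ∈ s, x ≤ m := fun x hx => by
    have := mem_Icc.1 (hs hx)
    by_contra
    exact hT ⟨x, mem_inter.2 ⟨hx, mem_Icc.2 (by omega)⟩⟩
  have := sum_add_three_le_of_card_eq_three hcard hsmall
  omega

lemma not_equitable_nineTwosTwoThrees (a b : ℕ) : ¬ Equitable 39 13 (nineTwosTwoThrees a b) := by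
  intro h
  obtain ⟨A, hdisj, hA⟩ := h.exists_pairwiseDisjoint
  have hs : sNK 39 13 = 60 := by decide
  set T := Icc 21 39
  have hpair : ∀ i ∈ Icc 1 9, #(A i ∩ T) = 2 := by
    intro i hi
    obtain ⟨hsub, hcard, hsum⟩ := hA i (Icc_subset_Icc_right (by norm_num) hi)
    have hp : nineTwosTwoThrees a b i = 2 := if_pos (mem_Icc.1 hi).2
    rw [hp] at hcard
    rw [hs] at hsum
    rw [inter_eq_left.2 (subset_Icc_sub_of_card_eq_two hsub hcard hsum), hcard]
  have htriple : ∀ i ∈ Icc 10 11, 1 ≤ #(A i ∩ T) := by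
    intro i hi
    obtain ⟨hsub, hcard, hsum⟩ := hA i (Icc_subset_Icc (by norm_num) (by norm_num) hi)
    have hp : nineTwosTwoThrees a b i = 3 := by
      rw [mem_Icc] at hi; unfold nineTwosTwoThrees; split_ifs <;> omega
    rw [hp] at hcard
    exact one_le_card.2 (inter_Icc_nonempty_of_card_eq_three hsub hcard (by omega))
  have hcount := sum_card_inter_le_card (hdisj.subset (coe_subset.2 (Icc_subset_Icc_right
    (show 11 ≤ 13 by norm_num)))) T
  have hlower : ∑ i ∈ Icc 1 11, (if i ≤ 9 then 2 else 1) ≤ ∑ i ∈ Icc 1 11, #(A i ∩ T) :=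
    sum_le_sum fun i hi => by
      rw [mem_Icc] at hi
      split_ifs with h
      · exact (hpair i (mem_Icc.2 ⟨hi.1, h⟩)).ge
      · exact htriple i (mem_Icc.2 ⟨by omega, hi.2⟩)
  have h20 : ∑ i ∈ Icc 1 11, (if i ≤ 9 then 2 else 1) = 20 := by decide
  have h19 : #T = 19 := by simp [T]
  omega

theorem statement1 :
    sNK 39 13 = 60 ∧
    (IsAscPartition 39 13 pA ∧ (∀ j, 1 ≤ j → j ≤ 12 → 0 ≤ slack 39 13 pA j) ∧
      ¬ Equitable 39 13 pA) ∧
    (IsAscPartition 39 13 pB ∧ (∀ j, 1 ≤ j → j ≤ 12 → 0 ≤ slack 39 13 pB j) ∧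
      ¬ Equitable 39 13 pB) ∧
    (IsAscPartition 39 13 pC ∧ (∀ j, 1 ≤ j → j ≤ 12 → 0 ≤ slack 39 13 pC j) ∧
      ¬ Equitable 39 13 pC) := by
  refine ⟨by decide,
    ⟨isAscPartition_nineTwosTwoThrees (a := 5) (b := 10) (by norm_num) (by norm_num) rfl,
      by decide, not_equitable_nineTwosTwoThrees 5 10⟩,
    ⟨isAscPartition_nineTwosTwoThrees (a := 6) (b := 9) (by norm_num) (by norm_num) rfl,
      by decide, not_equitable_nineTwosTwoThrees 6 9⟩,
    ⟨isAscPartition_nineTwosTwoThrees (a := 7) (b := 8) (by norm_num) (by norm_num) rfl,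
      by decide, not_equitable_nineTwosTwoThrees 7 8⟩⟩
end

section
/- The ascending partition P = [2^{25}, 3^2, 4, 6, 14] of n = 80 into k = 30 parts satisfies the slack condition (slack_j(P) ≥ 0 for all 1 ≤ j ≤ 29, where s^{80,30} = 108) but is not equitable: the set {1, …, 80} cannot be partitioned into 25 subsets of size 2, two subsets of size 3, and one subset each of sizes 4, 6 and 14, all having element sum 108. -/
/-- The partition `[2^25, 3^2, 4, 6, 14]` of 80 into 30 parts. -/
def pD : ℕ → ℕ := fun i =>
  if i ≤ 25 then 2 else if i ≤ 27 then 3 else if i ≤ 28 then 4 else if i ≤ 29 then 6 else 14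

/-! In an equitable partition, a pair summing to `108` inside `{1, …, 80}` contains neither a
number `≤ 27` nor `54`. Hence the five remaining blocks, of sizes `3, 3, 4, 6, 14` and total sum
`540`, consist of `{1, …, 27}` and a set `L ∋ 54` of three further numbers, of sum
`540 - 378 = 162`. Three or four numbers `≤ 27` sum to at most `102 < 108`, so each of the blocks
of sizes `3, 3, 4` meets `L`, and by pigeonhole in exactly one element. In each block of size `3`
this element is at least `108 - (27 + 26) = 55`, so `L` sums to at least `54 + 55 + 56 > 162`. -/

open Finset

lemma two_mul_sum_add_card_sq_le (F : Finset ℕ) {m : ℕ} (hF : ∀ x ∈ F, x ≤ m) :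
    2 * ∑ x ∈ F, x + #F ^ 2 ≤ (2 * m + 1) * #F := by
  induction F using Finset.induction_on_max generalizing m with
  | empty => simp
  | insert a s hlt ih =>
    have ha : a ∉ s := fun h => lt_irrefl a (hlt a h)
    rw [sum_insert ha, card_insert_of_notMem ha]
    have ham : a ≤ m := hF a (mem_insert_self a s)
    cases a with
    | zero => simp [eq_empty_of_forall_notMem fun x hx => Nat.not_lt_zero x (hlt x hx)]
    | succ b =>
      have := ih (m := b) fun x hx => Nat.lt_succ_iff.mp (hlt x hx)
      nlinarith

lemma two_mul_sum_add_card_sdiff_sq_le (B L : Finset ℕ) {m : ℕ} (hm : ∀ x ∈ B \ L, x ≤ m) :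
    2 * ∑ x ∈ B, x + #(B \ L) ^ 2 ≤ 2 * ∑ x ∈ B ∩ L, x + (2 * m + 1) * #(B \ L) := by
  have := two_mul_sum_add_card_sq_le (B \ L) hm
  rw [← sum_inter_add_sum_sdiff B L]
  omega

lemma sum_le_add_of_card_eq_two {B : Finset ℕ} {n x : ℕ} (hB : ∀ y ∈ B, y ≤ n) (hcard : #B = 2)
    (hx : x ∈ B) : ∑ y ∈ B, y ≤ x + n := by
  obtain ⟨u, v, huv, rfl⟩ := card_eq_two.mp hcard
  have := hB u (by simp)
  have := hB v (by simp)
  rw [sum_pair huv]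
  simp only [mem_insert, mem_singleton] at hx
  rcases hx with rfl | rfl <;> omega

lemma two_mul_ne_sum_of_card_eq_two {B : Finset ℕ} {x : ℕ} (hcard : #B = 2) (hx : x ∈ B) :
    2 * x ≠ ∑ y ∈ B, y := by
  obtain ⟨u, v, huv, rfl⟩ := card_eq_two.mp hcard
  rw [sum_pair huv]
  simp only [mem_insert, mem_singleton] at hx
  rcases hx with rfl | rfl <;> omega

lemma card_inter_eq_one_of_pairwiseDisjoint {ι α : Type*} [DecidableEq α] {I : Finset ι}
    {A : ι → Finset α} {L : Finset α} (hA : (I : Set ι).PairwiseDisjoint A)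
    (hmeet : ∀ i ∈ I, (A i ∩ L).Nonempty) (hL : #L ≤ #I) {i : ι} (hi : i ∈ I) :
    #(A i ∩ L) = 1 := by
  have htotal : ∑ j ∈ I, #(A j ∩ L) ≤ #I :=
    calc ∑ j ∈ I, #(A j ∩ L) = #(I.biUnion fun j => A j ∩ L) :=
          (card_biUnion (hA.mono fun j => inter_subset_left)).symm
      _ ≤ #L := card_le_card (biUnion_subset.mpr fun j _ => inter_subset_right)
      _ ≤ #I := hL
  by_contra hne
  have : ∑ j ∈ I, 1 < ∑ j ∈ I, #(A j ∩ L) :=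
    sum_lt_sum (fun j hj => (hmeet j hj).card_pos)
      ⟨i, hi, by have := (hmeet i hi).card_pos; omega⟩
  rw [← card_eq_sum_ones] at this
  omega

lemma pairwiseDisjoint_Icc_of_lt {α : Type*} {A : ℕ → Finset α} {k : ℕ}
    (h : ∀ i j, 1 ≤ i → i < j → j ≤ k → Disjoint (A i) (A j)) :
    ((Icc 1 k : Finset ℕ) : Set ℕ).PairwiseDisjoint A := by
  intro i hi j hj hij
  simp only [coe_Icc, Set.mem_Icc] at hi hj
  rcases hij.lt_or_gt with hij | hij
  · exact h i j hi.1 hij hj.2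
  · exact (h j i hj.1 hij hi.2).symm

lemma monotone_pD : Monotone pD := by
  intro i j hij
  unfold pD
  split_ifs <;> omega

lemma sNK_80_30 : sNK 80 30 = 108 := by decide

lemma insert_Icc_subset_biUnion {A : ℕ → Finset ℕ} (hcover : (Icc 1 30).biUnion A = Icc 1 80)
    (hcard : ∀ i ∈ Icc 1 30, #(A i) = pD i) (hsum : ∀ i ∈ Icc 1 30, ∑ x ∈ A i, x = 108) :
    insert 54 (Icc 1 27) ⊆ (Icc 26 30).biUnion A := by
  intro x hx
  simp only [mem_insert, mem_Icc] at hx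
  obtain ⟨i, hi, hxi⟩ := mem_biUnion.mp (hcover ▸ mem_Icc.mpr (by omega) :
    x ∈ (Icc 1 30).biUnion A)
  refine mem_biUnion.mpr ⟨i, ?_, hxi⟩
  by_contra hi'
  have hpair : #(A i) = 2 := by
    rw [hcard i hi]
    simp only [mem_Icc] at hi hi'
    unfold pD
    split_ifs <;> omega
  have hle : ∀ y ∈ A i, y ≤ 80 := fun y hy =>
    (mem_Icc.mp (hcover ▸ mem_biUnion.mpr ⟨i, hi, hy⟩)).2
  have h₁ := sum_le_add_of_card_eq_two hle hpair hxi
  have h₂ := two_mul_ne_sum_of_card_eq_two hpair hxi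
  rw [hsum i hi] at h₁ h₂
  omega

lemma false_of_three_blocks {A : ℕ → Finset ℕ} {L : Finset ℕ}
    (hdisj : ((Icc 26 28 : Finset ℕ) : Set ℕ).PairwiseDisjoint A)
    (hcard : ∀ i ∈ Icc 26 28, #(A i) = pD i) (hsum : ∀ i ∈ Icc 26 28, ∑ x ∈ A i, x = 108)
    (hsmall : ∀ i ∈ Icc 26 28, ∀ x ∈ A i \ L, x ≤ 27)
    (hL : #L = 3) (hLsum : ∑ x ∈ L, x = 162) (h54 : 54 ∈ L) : False := by
  have hrest : ∀ i ∈ Icc 26 28,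
      2 * 108 + #(A i \ L) ^ 2 ≤ 2 * ∑ x ∈ A i ∩ L, x + 55 * #(A i \ L) := fun i hi =>
    hsum i hi ▸ two_mul_sum_add_card_sdiff_sq_le (A i) L (hsmall i hi)
  have hsplit : ∀ i ∈ Icc 26 28, #(A i ∩ L) + #(A i \ L) = pD i := fun i hi =>
    hcard i hi ▸ card_inter_add_card_sdiff (A i) L
  have hmeet : ∀ i ∈ Icc 26 28, (A i ∩ L).Nonempty := by
    intro i hi
    rw [nonempty_iff_ne_empty]
    intro hempty
    have h₁ := hrest i hi
    have h₂ := hsplit i hi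
    have hp : pD i ≤ 4 := by simp only [mem_Icc] at hi; unfold pD; split_ifs <;> omega
    rw [hempty, sum_empty] at h₁
    rw [hempty, card_empty, zero_add] at h₂
    nlinarith
  have hone : ∀ i ∈ Icc 26 28, #(A i ∩ L) = 1 := fun i hi =>
    card_inter_eq_one_of_pairwiseDisjoint hdisj hmeet (by simp [hL]) hi
  have hbig : ∀ i ∈ Icc 26 27, ∃ l ∈ A i ∩ L, 55 ≤ l := by
    intro i hi
    have hi' : i ∈ Icc 26 28 := Icc_subset_Icc le_rfl (by omega) hi
    obtain ⟨l, hl⟩ := card_eq_one.mp (hone i hi')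
    have hp : pD i = 3 := by simp only [mem_Icc] at hi; unfold pD; split_ifs <;> omega
    have h₂ : #(A i \ L) = 2 := by have := hsplit i hi'; have := hone i hi'; omega
    have h₁ := hrest i hi'
    rw [h₂, hl, sum_singleton] at h₁
    exact ⟨l, hl ▸ mem_singleton_self l, by omega⟩
  obtain ⟨l₁, hl₁, h55₁⟩ := hbig 26 (by simp)
  obtain ⟨l₂, hl₂, h55₂⟩ := hbig 27 (by simp)
  have hne : l₁ ≠ l₂ := by
    rintro rfl
    exact disjoint_left.mp (hdisj (by simp) (by simp) (by omega))
      (mem_inter.mp hl₁).1 (mem_inter.mp hl₂).1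
  have htriple : ∑ x ∈ {54, l₁, l₂}, x ≤ ∑ x ∈ L, x := by
    refine sum_le_sum_of_subset fun x hx => ?_
    simp only [mem_insert, mem_singleton] at hx
    rcases hx with rfl | rfl | rfl
    exacts [h54, (mem_inter.mp hl₁).2, (mem_inter.mp hl₂).2]
  rw [sum_insert (by simp; omega), sum_pair hne, hLsum] at htriple
  omega

theorem not_equitable_pD : ¬ Equitable 80 30 pD := by
  rintro ⟨A, hlt, hcover, hcard, hsum⟩
  replace hcard : ∀ i ∈ Icc 1 30, #(A i) = pD i := fun i hi => by
    rw [mem_Icc] at hi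
    exact hcard i hi.1 hi.2
  replace hsum : ∀ i ∈ Icc 1 30, ∑ x ∈ A i, x = 108 := fun i hi => by
    rw [mem_Icc] at hi
    exact sNK_80_30 ▸ hsum i hi.1 hi.2
  have hdisj := pairwiseDisjoint_Icc_of_lt hlt
  have hsub : ∀ {a b : ℕ}, 1 ≤ a → b ≤ 30 → Icc a b ⊆ Icc 1 30 := fun ha hb =>
    Icc_subset_Icc ha hb
  set T := (Icc 26 30).biUnion A
  have hsmall : insert 54 (Icc 1 27) ⊆ T := insert_Icc_subset_biUnion hcover hcard hsum
  have hTdisj := hdisj.subset (coe_subset.mpr (hsub (a := 26) (b := 30) (by omega) le_rfl))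
  have hTcard : #T = 30 := by
    rw [card_biUnion hTdisj, sum_congr rfl fun i hi => hcard i (hsub (by omega) le_rfl hi)]
    rfl
  have hTsum : ∑ x ∈ T, x = 540 := by
    rw [sum_biUnion hTdisj, sum_congr rfl fun i hi => hsum i (hsub (by omega) le_rfl hi)]
    rfl
  have hIccT : Icc 1 27 ⊆ T := (subset_insert 54 _).trans hsmall
  refine false_of_three_blocks (L := T \ Icc 1 27)
    (hdisj.subset (coe_subset.mpr (hsub (by omega) (by omega))))
    (fun i hi => hcard i (hsub (by omega) (by omega) hi))
    (fun i hi => hsum i (hsub (by omega) (by omega) hi)) ?_ ?_ ?_ ?_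
  · intro i hi x hx
    obtain ⟨hxA, hxL⟩ := mem_sdiff.mp hx
    have hxT : x ∈ T := mem_biUnion.mpr ⟨i, Icc_subset_Icc le_rfl (by omega) hi, hxA⟩
    by_contra h
    exact hxL (mem_sdiff.mpr ⟨hxT, by simp; omega⟩)
  · rw [card_sdiff_of_subset hIccT, hTcard]
    rfl
  · have := sum_sdiff (f := fun x => x) hIccT
    rw [hTsum] at this
    have h378 : ∑ x ∈ Icc 1 27, x = 378 := by decide
    omega
  · exact mem_sdiff.mpr ⟨hsmall (mem_insert_self 54 _), by simp⟩

theorem statement2 :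
    sNK 80 30 = 108 ∧
    IsAscPartition 80 30 pD ∧
    (∀ j, 1 ≤ j → j ≤ 29 → 0 ≤ slack 80 30 pD j) ∧
    ¬ Equitable 80 30 pD := by
  refine ⟨sNK_80_30, ⟨fun i _ _ => le_trans (by decide) (monotone_pD i.zero_le),
    fun _ _ _ hij _ => monotone_pD hij, by decide⟩, fun j hj₁ hj₂ => ?_, not_equitable_pD⟩
  interval_cases j <;> decide
end

section
/- Let P = [p_1, …, p_k] be an ascending partition of n of size k with s^{n,k} = n(n+1)/(2k) an integer. If min_{1 ≤ j ≤ k−1} slack_j(P) < 0, then there is an index j < k with p_j < p_{j+1} at which this minimum is attained, i.e., slack_j(P) = min_{1 ≤ i ≤ k−1} slack_i(P). In other words, if negative, the minimum slack is attained at the end of a block that is not the last block. -/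
/-!
Write `F m = ∑_{i=1}^m (n - i + 1)`, so that `slack_j = F (p_1 + ⋯ + p_j) - j s` and `2 F m = m (2n + 1 - m)`
is quadratic in `m` with leading coefficient `-1/2`. Hence whenever two consecutive parts are equal,
`p_{j+1} = p_{j+2} = q`, the slack has second difference `-q² < 0` at `j + 1`, so `j + 1` cannot be a
minimum of the slack over `0, …, k`. Since `slack_0 = 0` and `slack_k ≥ 0`, a negative minimum over
`1, …, k - 1` is one over `0, …, k`, so every index attaining it is a strict ascent `p_j < p_{j+1}`.
-/

open Finset

lemma two_mul_sum_Icc_sub_add_one (n m : ℕ) :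
    2 * ∑ i ∈ Icc 1 m, ((n : ℤ) - i + 1) = m * (2 * n + 1 - m) := by
  induction m with
  | zero => simp
  | succ m ih =>
    rw [sum_Icc_succ_top (by omega), mul_add, ih]
    push_cast
    ring

lemma two_mul_slack (n k : ℕ) (p : ℕ → ℕ) (j : ℕ) :
    2 * slack n k p j = (∑ t ∈ Icc 1 j, p t : ℕ) * (2 * n + 1 - (∑ t ∈ Icc 1 j, p t : ℕ))
      - 2 * j * sNK n k := by
  rw [slack, mul_sub, two_mul_sum_Icc_sub_add_one]
  ring

lemma slack_zero (n k : ℕ) (p : ℕ → ℕ) : slack n k p 0 = 0 := by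
  simp [slack]

lemma slack_nonneg_of_sum_eq {n k : ℕ} {p : ℕ → ℕ} (hsum : ∑ i ∈ Icc 1 k, p i = n) :
    0 ≤ slack n k p k := by
  have hks : 2 * k * sNK n k ≤ n * (n + 1) := by
    rw [sNK, mul_comm]
    exact Nat.div_mul_le_self _ _
  have h := two_mul_slack n k p k
  rw [hsum] at h
  have : (2 * k * sNK n k : ℤ) ≤ n * (n + 1) := by exact_mod_cast hks
  linarith

lemma slack_add_slack_add_sq_of_eq {n k : ℕ} {p : ℕ → ℕ} {j : ℕ} (hp : p (j + 1) = p (j + 2)) :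
    slack n k p (j + 2) + slack n k p j + (p (j + 1) : ℤ) ^ 2 = 2 * slack n k p (j + 1) := by
  have h₀ := two_mul_slack n k p j
  have h₁ := two_mul_slack n k p (j + 1)
  have h₂ := two_mul_slack n k p (j + 2)
  rw [sum_Icc_succ_top (by omega)] at h₁ h₂
  rw [sum_Icc_succ_top (by omega), ← hp] at h₂
  push_cast at h₀ h₁ h₂
  have : 2 * (slack n k p (j + 2) + slack n k p j + (p (j + 1) : ℤ) ^ 2) =
      2 * (2 * slack n k p (j + 1)) := by
    linear_combination h₂ + h₀ - 2 * h₁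
  linarith

theorem statement8_general (n k : ℕ)
    (p : ℕ → ℕ) (hasc : IsAscPartition n k p)
    (j₀ : ℕ) (hj₀1 : 1 ≤ j₀) (hj₀k : j₀ ≤ k - 1)
    (hmin : ∀ i, 1 ≤ i → i ≤ k - 1 → slack n k p j₀ ≤ slack n k p i)
    (hneg : slack n k p j₀ < 0) :
    ∃ j, 1 ≤ j ∧ j < k ∧ p j < p (j + 1) ∧ slack n k p j = slack n k p j₀ := by
  obtain ⟨hpos, hmono, hsum⟩ := hasc
  refine ⟨j₀, hj₀1, by omega, lt_of_le_of_ne (hmono _ _ hj₀1 (by omega) (by omega)) ?_, rfl⟩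
  intro hp
  obtain ⟨j, rfl⟩ : ∃ j, j₀ = j + 1 := ⟨j₀ - 1, by omega⟩
  have hconcave := slack_add_slack_add_sq_of_eq (n := n) (k := k) hp
  have hq : (1 : ℤ) ≤ (p (j + 1) : ℤ) ^ 2 :=
    one_le_pow₀ (by exact_mod_cast hpos _ hj₀1 (by omega))
  have hprev : slack n k p (j + 1) ≤ slack n k p j := by
    rcases j with _ | j
    · simpa [slack_zero] using hneg.le
    · exact hmin _ (by omega) (by omega)
  have hnext : slack n k p (j + 1) ≤ slack n k p (j + 2) := by
    rcases (show j + 2 ≤ k - 1 ∨ j + 2 = k by omega) with hlt | rfl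
    · exact hmin _ (by omega) hlt
    · linarith [slack_nonneg_of_sum_eq hsum]
  linarith

theorem statement8 (n k : ℕ) (hn : 0 < n) (hk : 0 < k)
    (hdvd : k ∣ n * (n + 1) / 2) (p : ℕ → ℕ) (hasc : IsAscPartition n k p)
    (j₀ : ℕ) (hj₀1 : 1 ≤ j₀) (hj₀k : j₀ ≤ k - 1)
    (hmin : ∀ i, 1 ≤ i → i ≤ k - 1 → slack n k p j₀ ≤ slack n k p i)
    (hneg : slack n k p j₀ < 0) :
    ∃ j, 1 ≤ j ∧ j < k ∧ p j < p (j + 1) ∧ slack n k p j = slack n k p j₀ :=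
  statement8_general n k p hasc j₀ hj₀1 hj₀k hmin hneg
end

section
/- Let P = [p_1, …, p_k] be an ascending partition of n of size k with s^{n,k} = n(n+1)/(2k) an integer, and set slack_0(P) = 0. If 1 ≤ j ≤ k − 1 and p_j = p_{j+1}, then slack_{j+1}(P) − slack_j(P) < slack_j(P) − slack_{j−1}(P); consequently slack_j(P) > (slack_{j−1}(P) + slack_{j+1}(P))/2, so slack_j(P) cannot be a strict minimum of the sequence of slacks. -/
open Finset

lemma sum_Icc_one_add_sub_sum_Icc_one {M : Type*} [AddCommGroup M] (g : ℕ → M) (a q : ℕ) :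
    ∑ i ∈ Icc 1 (a + q), g i - ∑ i ∈ Icc 1 a, g i = ∑ i ∈ range q, g (a + 1 + i) := by
  induction q with
  | zero => simp
  | succ q ih =>
    rw [← add_assoc, sum_Icc_succ_top (by omega), sum_range_succ, ← ih, add_right_comm a 1 q]
    abel

lemma slack_succ_sub_slack (n k : ℕ) (p : ℕ → ℕ) (j : ℕ) :
    slack n k p (j + 1) - slack n k p j =
      ∑ i ∈ range (p (j + 1)),
        ((n : ℤ) - ((∑ t ∈ Icc 1 j, p t) + 1 + i : ℕ) + 1) - sNK n k := by
  simp only [slack, sum_Icc_succ_top (Nat.le_add_left 1 j)]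
  rw [← sum_Icc_one_add_sub_sum_Icc_one (fun i : ℕ => (n : ℤ) - i + 1)]
  push_cast
  ring

/-- The second block of `q = p (j + 1)` summands `n - i + 1` is the first one shifted by `q`,
so each of its terms is smaller by `q`. -/
lemma slack_sub_slack_sub_sub_eq_neg_sq (n k : ℕ) (p : ℕ → ℕ) (j : ℕ)
    (hp : p (j + 1) = p (j + 2)) :
    slack n k p (j + 2) - slack n k p (j + 1) - (slack n k p (j + 1) - slack n k p j) =
      -(p (j + 1) : ℤ) ^ 2 := by
  rw [slack_succ_sub_slack, slack_succ_sub_slack, ← hp, sum_Icc_succ_top (Nat.le_add_left 1 j),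
    sub_sub_sub_cancel_right, ← sum_sub_distrib,
    sum_congr rfl fun i _ => (by push_cast; ring : _ = -(p (j + 1) : ℤ))]
  simp [sq]

theorem statement9_general (n k : ℕ) (p : ℕ → ℕ) (hasc : IsAscPartition n k p)
    (j : ℕ) (hj1 : 1 ≤ j) (hjk : j ≤ k - 1) (hpj : p j = p (j + 1)) :
    slack n k p (j + 1) - slack n k p j < slack n k p j - slack n k p (j - 1) ∧
    2 * slack n k p j > slack n k p (j - 1) + slack n k p (j + 1) := by
  obtain ⟨m, rfl⟩ : ∃ m, j = m + 1 := ⟨j - 1, by omega⟩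
  have hq : 0 < p (m + 1) := hasc.1 (m + 1) le_add_self (by omega)
  have hdrop := slack_sub_slack_sub_sub_eq_neg_sq n k p m hpj
  have hsq : (0 : ℤ) < (p (m + 1) : ℤ) ^ 2 := by positivity
  rw [Nat.add_sub_cancel]
  constructor <;> linarith

theorem statement9 (n k : ℕ) (hn : 0 < n) (hk : 0 < k)
    (hdvd : k ∣ n * (n + 1) / 2) (p : ℕ → ℕ) (hasc : IsAscPartition n k p)
    (j : ℕ) (hj1 : 1 ≤ j) (hjk : j ≤ k - 1) (hpj : p j = p (j + 1)) :
    slack n k p (j + 1) - slack n k p j < slack n k p j - slack n k p (j - 1) ∧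
    2 * slack n k p j > slack n k p (j - 1) + slack n k p (j + 1) :=
  statement9_general n k p hasc j hj1 hjk hpj
end

section
/- For every odd integer t ≥ 11, with n = 6t + 2, k = 2t + 1, e = (3t + 1)/2 and f = 2, there exists an ascending partition P = [p_1, …, p_k] of n of size k with p_1 = ⋯ = p_e = 2 and p_{e+1} = ⋯ = p_{e+f} = 3, such that slack_j(P) ≥ 0 for all 1 ≤ j ≤ k − 1 and P is not equitable. -/
/-!
Write `t = 2u + 1`, so `n = 12u + 8`, `k = 4u + 3` and `s^{n,k} = 18u + 12`, and take
`P = 2^{3u+2} 3^2 6^{u-2} 10`. The slacks are explicit quadratics in `j`, nonnegative once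
`u ≥ 5`. `P` is not equitable by counting the elements above `m = 6u + 3`: a pair summing to
`s` must lie entirely above `m` because `m + n < s`, and a triple must meet it because
`3m < s`; so the `3u + 2` pairs and two triples need `6u + 6` of the `n - m = 6u + 5` such
elements.
-/

open Finset

lemma slack_nonneg_iff (n k : ℕ) (p : ℕ → ℕ) (j : ℕ) :
    0 ≤ slack n k p j ↔
      2 * j * (sNK n k : ℤ) ≤
        (∑ i ∈ Icc 1 j, p i : ℕ) * (2 * n + 1 - (∑ i ∈ Icc 1 j, p i : ℕ)) := by
  rw [slack, ← two_mul_sum_Icc_sub_add_one]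
  constructor <;> intro h <;> linarith

lemma sum_Icc_add_of_eq_const (p : ℕ → ℕ) (a r c : ℕ)
    (h : ∀ i, a < i → i ≤ a + r → p i = c) :
    ∑ i ∈ Icc 1 (a + r), p i = ∑ i ∈ Icc 1 a, p i + r * c := by
  induction r with
  | zero => simp
  | succ r ih =>
    rw [← add_assoc, sum_Icc_succ_top (by omega), ih fun i h₁ h₂ => h i h₁ (by omega),
      h _ (by omega) (by omega)]
    ring

lemma lt_of_mem_of_card_eq_two {A : Finset ℕ} {m n : ℕ} (hA : ∀ x ∈ A, x ≤ n)
    (hcard : #A = 2) (hsum : m + n < ∑ x ∈ A, x) : ∀ x ∈ A, m < x := by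
  intro x hx
  obtain ⟨y, hy⟩ := card_eq_one.1 (by rw [card_erase_of_mem hx, hcard] : #(A.erase x) = 1)
  have hyA : y ∈ A := mem_of_mem_erase (hy ▸ mem_singleton_self y)
  rw [← add_sum_erase A _ hx, hy, sum_singleton] at hsum
  have := hA y hyA
  omega

lemma exists_mem_lt_of_card_mul_lt_sum {A : Finset ℕ} {m : ℕ} (h : #A * m < ∑ x ∈ A, x) :
    ∃ x ∈ A, m < x :=
  exists_lt_of_sum_lt (by simpa using h)

theorem not_equitable_of_twos_threes (n k a b m : ℕ) (p : ℕ → ℕ) (hab : a + b ≤ k)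
    (h2 : ∀ i, 1 ≤ i → i ≤ a → p i = 2) (h3 : ∀ i, a < i → i ≤ a + b → p i = 3)
    (hpair : m + n < sNK n k) (htriple : 3 * m < sNK n k) (hcount : n - m < 2 * a + b) :
    ¬ Equitable n k p := by
  rintro ⟨A, hdisj, hcover, hcard, hsum⟩
  set I := Icc 1 (a + b)
  set B := Ioc m n
  have hle : ∀ i ∈ I, ∀ x ∈ A i, x ≤ n := fun i hi x hx => by
    have hmem : x ∈ Icc 1 n :=
      hcover ▸ mem_biUnion.2 ⟨i, mem_Icc.2 ⟨(mem_Icc.1 hi).1, by grind⟩, hx⟩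
    exact (mem_Icc.1 hmem).2
  have hmeet : ∀ i ∈ I, (if i ≤ a then 2 else 1) ≤ #(A i ∩ B) := by
    intro i hi
    obtain ⟨hi1, hi2⟩ := mem_Icc.1 hi
    have hsumi := hsum i hi1 (by omega)
    split_ifs with hia
    · have hcardi : #(A i) = 2 := by rw [hcard i hi1 (by omega), h2 i hi1 hia]
      have hlt := lt_of_mem_of_card_eq_two (hle i hi) hcardi (hsumi ▸ hpair)
      rw [inter_eq_left.2 fun x hx => mem_Ioc.2 ⟨hlt x hx, hle i hi x hx⟩, hcardi]
    · have hcardi : #(A i) = 3 := by rw [hcard i hi1 (by omega), h3 i (by omega) hi2]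
      obtain ⟨x, hx, hmx⟩ := exists_mem_lt_of_card_mul_lt_sum (m := m) (by rwa [hcardi, hsumi])
      exact card_pos.2 ⟨x, mem_inter.2 ⟨hx, mem_Ioc.2 ⟨hmx, hle i hi x hx⟩⟩⟩
  have hdisjI : (I : Set ℕ).PairwiseDisjoint fun i => A i ∩ B := by
    intro i hi j hj hij
    obtain ⟨hi1, hi2⟩ := mem_Icc.1 hi
    obtain ⟨hj1, hj2⟩ := mem_Icc.1 hj
    refine Disjoint.mono inter_subset_left inter_subset_left ?_
    rcases lt_or_gt_of_ne hij with h | h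
    · exact hdisj i j hi1 h (by omega)
    · exact (hdisj j i hj1 h (by omega)).symm
  have hlower : 2 * a + b ≤ ∑ i ∈ I, #(A i ∩ B) := by
    have hconst := sum_Icc_add_of_eq_const (fun i => if i ≤ a then 2 else 1) a b 1
      (fun i h _ => if_neg (by omega))
    have htwos := sum_Icc_add_of_eq_const (fun i => if i ≤ a then 2 else 1) 0 a 2
      (fun i _ h => if_pos (by omega))
    simp only [zero_add, Icc_eq_empty_of_lt zero_lt_one, sum_empty] at htwos
    calc 2 * a + b = ∑ i ∈ I, if i ≤ a then 2 else 1 := by rw [hconst, htwos]; ring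
      _ ≤ ∑ i ∈ I, #(A i ∩ B) := sum_le_sum hmeet
  have hupper : ∑ i ∈ I, #(A i ∩ B) ≤ n - m := by
    rw [← card_biUnion hdisjI, ← Nat.card_Ioc m n]
    exact card_le_card (biUnion_subset.2 fun _ _ => inter_subset_right)
  omega

def part (u i : ℕ) : ℕ :=
  if i ≤ 3 * u + 2 then 2 else if i ≤ 3 * u + 4 then 3 else if i ≤ 4 * u + 2 then 6 else 10

section part

variable (u : ℕ)

lemma part_eq_three {i : ℕ} (h₁ : 3 * u + 2 < i) (h₂ : i ≤ 3 * u + 4) : part u i = 3 := by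
  unfold part
  split_ifs <;> omega

lemma sNK_part : sNK (12 * u + 8) (4 * u + 3) = 18 * u + 12 := by
  rw [sNK, show (12 * u + 8) * (12 * u + 8 + 1) = 2 * (4 * u + 3) * (18 * u + 12) by ring,
    Nat.mul_div_cancel_left _ (by omega)]

lemma sum_part_of_le {j : ℕ} (hj : j ≤ 3 * u + 2) : ∑ i ∈ Icc 1 j, part u i = 2 * j := by
  simpa [mul_comm] using sum_Icc_add_of_eq_const (part u) 0 j 2
    fun i _ hi => if_pos (by omega)

lemma sum_part_threes {r : ℕ} (hr : r ≤ 2) :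
    ∑ i ∈ Icc 1 (3 * u + 2 + r), part u i = 6 * u + 4 + 3 * r := by
  rw [sum_Icc_add_of_eq_const (part u) _ r 3 fun i h₁ h₂ => part_eq_three u h₁ (by omega),
    sum_part_of_le u le_rfl]
  ring

lemma sum_part_sixes {r : ℕ} (hr : 3 * u + 4 + r ≤ 4 * u + 2) :
    ∑ i ∈ Icc 1 (3 * u + 4 + r), part u i = 6 * u + 10 + 6 * r := by
  rw [sum_Icc_add_of_eq_const (part u) _ r 6 fun i h₁ h₂ => by unfold part; split_ifs <;> omega,
    sum_part_threes u le_rfl]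
  ring

lemma sum_part (hu : 2 ≤ u) : ∑ i ∈ Icc 1 (4 * u + 3), part u i = 12 * u + 8 := by
  have h := sum_Icc_add_of_eq_const (part u) (4 * u + 2) 1 10
    fun i h₁ h₂ => by unfold part; split_ifs <;> omega
  obtain ⟨r, hr⟩ : ∃ r, 4 * u + 2 = 3 * u + 4 + r := ⟨u - 2, by omega⟩
  rw [hr, sum_part_sixes u (by omega)] at h
  rw [show 4 * u + 3 = 3 * u + 4 + r + 1 by omega, h]
  omega

lemma isAscPartition_part (hu : 2 ≤ u) : IsAscPartition (12 * u + 8) (4 * u + 3) (part u) :=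
  ⟨fun i _ _ => by unfold part; split_ifs <;> omega,
    fun i j _ hij _ => by unfold part; split_ifs <;> omega,
    sum_part u hu⟩

lemma slack_part_nonneg (hu : 5 ≤ u) {j : ℕ} (hj : j ≤ 4 * u + 2) :
    0 ≤ slack (12 * u + 8) (4 * u + 3) (part u) j := by
  rw [slack_nonneg_iff, sNK_part]
  rcases le_or_gt j (3 * u + 2) with hj' | hj'
  · rw [sum_part_of_le u hj']
    push_cast
    nlinarith
  rcases le_or_gt j (3 * u + 4) with hj'' | hj''
  · obtain ⟨r, rfl⟩ : ∃ r, j = 3 * u + 2 + r := ⟨j - (3 * u + 2), by omega⟩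
    rw [sum_part_threes u (by omega)]
    push_cast
    have hr : (r : ℤ) = 1 ∨ (r : ℤ) = 2 := by omega
    rcases hr with hr | hr <;> rw [hr] <;> nlinarith
  · obtain ⟨r, rfl⟩ : ∃ r, j = 3 * u + 4 + r := ⟨j - (3 * u + 4), by omega⟩
    rw [sum_part_sixes u hj]
    push_cast
    have hr : (r : ℤ) + 2 ≤ u := by omega
    nlinarith

lemma not_equitable_part (hu : 1 ≤ u) : ¬ Equitable (12 * u + 8) (4 * u + 3) (part u) :=
  not_equitable_of_twos_threes _ _ (3 * u + 2) 2 (6 * u + 3) _ (by omega)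
    (fun i _ hi => if_pos hi) (fun _ => part_eq_three u)
    (by rw [sNK_part]; omega) (by rw [sNK_part]; omega) (by omega)

end part

theorem statement14_general (t : ℕ) (ht11 : 11 ≤ t) (e : ℕ) (he : 2 * e = 3 * t + 1) :
    ∃ p : ℕ → ℕ,
      IsAscPartition (6 * t + 2) (2 * t + 1) p ∧
      (∀ i, 1 ≤ i → i ≤ e → p i = 2) ∧
      (∀ i, e + 1 ≤ i → i ≤ e + 2 → p i = 3) ∧
      (∀ j, 1 ≤ j → j ≤ 2 * t → 0 ≤ slack (6 * t + 2) (2 * t + 1) p j) ∧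
      ¬ Equitable (6 * t + 2) (2 * t + 1) p := by
  obtain ⟨u, rfl⟩ : ∃ u, t = 2 * u + 1 := ⟨t / 2, by omega⟩
  obtain rfl : e = 3 * u + 2 := by omega
  rw [show 6 * (2 * u + 1) + 2 = 12 * u + 8 by ring, show 2 * (2 * u + 1) + 1 = 4 * u + 3 by ring]
  exact ⟨part u, isAscPartition_part u (by omega), fun i _ hi => if_pos hi,
    fun _ => part_eq_three u,
    fun j _ hj => slack_part_nonneg u (by omega) (by omega), not_equitable_part u (by omega)⟩

theorem statement14 (t : ℕ) (ht : Odd t) (ht11 : 11 ≤ t) (e : ℕ) (he : 2 * e = 3 * t + 1) :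
    ∃ p : ℕ → ℕ,
      IsAscPartition (6 * t + 2) (2 * t + 1) p ∧
      (∀ i, 1 ≤ i → i ≤ e → p i = 2) ∧
      (∀ i, e + 1 ≤ i → i ≤ e + 2 → p i = 3) ∧
      (∀ j, 1 ≤ j → j ≤ 2 * t → 0 ≤ slack (6 * t + 2) (2 * t + 1) p j) ∧
      ¬ Equitable (6 * t + 2) (2 * t + 1) p :=
  statement14_general t ht11 e he
end

section
/- For every odd integer k ≥ 13, there exists an ascending partition P of n = 3k of size k such that slack_j(P) ≥ 0 for all 1 ≤ j ≤ k − 1 and P is not equitable. -/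
open Finset

lemma two_mul_sum_Icc_one_sub_add_one (n S : ℕ) :
    2 * ∑ i ∈ Icc 1 S, ((n : ℤ) - i + 1) = S * (2 * n + 1 - S) := by
  induction S with
  | zero => simp
  | succ S ih =>
    rw [sum_Icc_succ_top (by omega), mul_add, ih]
    push_cast
    ring

lemma slack_nonneg_of_le {n k j : ℕ} {p : ℕ → ℕ} {S : ℤ}
    (hS : ((∑ t ∈ Icc 1 j, p t : ℕ) : ℤ) = S) (h : 2 * j * (sNK n k : ℤ) ≤ S * (2 * n + 1 - S)) :
    0 ≤ slack n k p j := by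
  have := two_mul_sum_Icc_one_sub_add_one n (∑ t ∈ Icc 1 j, p t)
  rw [hS] at this
  rw [slack]
  linarith

lemma sum_Icc_one_eq_add_mul_of_eq_on_Ioc {p : ℕ → ℕ} {c j v : ℕ} (hcj : c ≤ j)
    (hv : ∀ i, c < i → i ≤ j → p i = v) :
    ∑ i ∈ Icc 1 j, p i = ∑ i ∈ Icc 1 c, p i + (j - c) * v := by
  have hIcc : ∀ b, Icc 1 b = Ioc 0 b := fun _ => rfl
  rw [hIcc, hIcc, ← sum_Ioc_consecutive _ (Nat.zero_le c) hcj,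
    sum_congr rfl fun i hi => hv i (mem_Ioc.mp hi).1 (mem_Ioc.mp hi).2, sum_const,
    Nat.card_Ioc, smul_eq_mul]

lemma sum_le_add_card_sub_one_mul {A : Finset ℕ} {n x : ℕ} (hA : ∀ y ∈ A, y ≤ n) (hx : x ∈ A) :
    ∑ y ∈ A, y ≤ x + (#A - 1) * n := by
  rw [← add_sum_erase A _ hx, ← card_erase_of_mem hx, ← smul_eq_mul]
  exact Nat.add_le_add_left (sum_le_card_nsmul _ _ _ fun y hy => hA y (mem_of_mem_erase hy)) x

lemma exists_mem_sum_add_three_le_three_mul {A : Finset ℕ} (hA : #A = 3) :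
    ∃ x ∈ A, ∑ y ∈ A, y + 3 ≤ 3 * x := by
  obtain ⟨x, y, z, hxy, hxz, hyz, rfl⟩ := card_eq_three.mp hA
  rw [sum_insert (by simp [hxy, hxz]), sum_pair hyz]
  by_contra! h
  have := h x (by simp)
  have := h y (by simp)
  have := h z (by simp)
  omega

theorem not_equitable_of_many_pairs_and_triples {n k a b : ℕ} {p : ℕ → ℕ} (hab : a + b ≤ k)
    (hpair : ∀ i, 1 ≤ i → i ≤ a → p i = 2) (htriple : ∀ i, a < i → i ≤ a + b → p i = 3)
    (hs : 2 * sNK n k ≤ 3 * n + 3) (hcount : n + 1 < 2 * a + b + (sNK n k - n)) :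
    ¬ Equitable n k p := by
  rintro ⟨A, hdisj, hcover, hcard, hsum⟩
  set T := Icc (sNK n k - n) n
  have hle : ∀ i, 1 ≤ i → i ≤ k → ∀ x ∈ A i, x ≤ n := fun i h1 h2 x hx =>
    (mem_Icc.mp (hcover ▸ mem_biUnion.mpr ⟨i, mem_Icc.mpr ⟨h1, h2⟩, hx⟩)).2
  have hpairT : ∀ i, 1 ≤ i → i ≤ a → 2 ≤ #(A i ∩ T) := by
    intro i h1 h2
    have hc : #(A i) = 2 := (hcard i h1 (by omega)).trans (hpair i h1 h2)
    suffices A i ⊆ T by rw [inter_eq_left.mpr this, hc]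
    intro x hx
    have := sum_le_add_card_sub_one_mul (hle i h1 (by omega)) hx
    rw [hc, hsum i h1 (by omega)] at this
    exact mem_Icc.mpr ⟨by omega, hle i h1 (by omega) x hx⟩
  have htripleT : ∀ i, a < i → i ≤ a + b → 1 ≤ #(A i ∩ T) := by
    intro i h1 h2
    obtain ⟨x, hx, hx3⟩ := exists_mem_sum_add_three_le_three_mul
      ((hcard i (by omega) (by omega)).trans (htriple i h1 h2))
    rw [hsum i (by omega) (by omega)] at hx3
    have hxn := hle i (by omega) (by omega) x hx
    exact card_pos.mpr ⟨x, mem_inter.mpr ⟨hx, mem_Icc.mpr ⟨by omega, hxn⟩⟩⟩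
  have hupper : ∑ i ∈ Icc 1 (a + b), #(A i ∩ T) ≤ #T := by
    rw [← card_biUnion]
    · exact card_le_card (biUnion_subset.mpr fun _ _ => inter_subset_right)
    · intro i hi j hj hij
      simp only [coe_Icc, Set.mem_Icc] at hi hj
      refine Disjoint.mono inter_subset_left inter_subset_left ?_
      rcases hij.lt_or_gt with h | h
      · exact hdisj i j hi.1 h (by omega)
      · exact (hdisj j i hj.1 h (by omega)).symm
  have hlower : 2 * a + b ≤ ∑ i ∈ Icc 1 (a + b), #(A i ∩ T) := by
    have hIcc : Icc 1 (a + b) = Ioc 0 (a + b) := rfl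
    rw [hIcc, ← sum_Ioc_consecutive _ (Nat.zero_le a) (Nat.le_add_right a b)]
    have h1 := card_nsmul_le_sum (Ioc 0 a) _ 2 fun i hi =>
      hpairT i (mem_Ioc.mp hi).1 (mem_Ioc.mp hi).2
    have h2 := card_nsmul_le_sum (Ioc a (a + b)) _ 1 fun i hi =>
      htripleT i (mem_Ioc.mp hi).1 (mem_Ioc.mp hi).2
    simp only [Nat.card_Ioc, smul_eq_mul] at h1 h2
    omega
  rw [Nat.card_Icc] at hupper
  omega

def slackCounterexample (u e i : ℕ) : ℕ :=
  if i ≤ 3 * u + e then 2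
  else if i ≤ 3 * u + 2 + 2 * e then 3
  else if i ≤ 4 * u + 2 * e then 6
  else 9 + e

namespace slackCounterexample

variable {u e j : ℕ}

lemma sNK_eq : sNK (3 * (4 * u + 1 + 2 * e)) (4 * u + 1 + 2 * e) = 18 * u + 6 + 9 * e := by
  rw [sNK, show 3 * (4 * u + 1 + 2 * e) * (3 * (4 * u + 1 + 2 * e) + 1)
    = (18 * u + 6 + 9 * e) * (2 * (4 * u + 1 + 2 * e)) by ring]
  exact Nat.mul_div_cancel _ (by omega)

lemma sum_Icc_of_le_pairs (hj : j ≤ 3 * u + e) :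
    ∑ i ∈ Icc 1 j, slackCounterexample u e i = 2 * j := by
  rw [sum_Icc_one_eq_add_mul_of_eq_on_Ioc (Nat.zero_le j) (v := 2)
    fun i _ hi => by rw [slackCounterexample, if_pos (hi.trans hj)]]
  simp [mul_comm]

lemma sum_Icc_of_le_triples (h₁ : 3 * u + e ≤ j) (h₂ : j ≤ 3 * u + 2 + 2 * e) :
    ∑ i ∈ Icc 1 j, slackCounterexample u e i + (3 * u + e) = 3 * j := by
  rw [sum_Icc_one_eq_add_mul_of_eq_on_Ioc h₁ (v := 3) fun i hi hi' => by
      rw [slackCounterexample, if_neg (by omega), if_pos (by omega)],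
    sum_Icc_of_le_pairs le_rfl]
  omega

lemma sum_Icc_of_le_sixes (h₁ : 3 * u + 2 + 2 * e ≤ j) (h₂ : j ≤ 4 * u + 2 * e) :
    ∑ i ∈ Icc 1 j, slackCounterexample u e i + (12 * u + 6 + 7 * e) = 6 * j := by
  have := sum_Icc_of_le_triples (u := u) (e := e) (j := 3 * u + 2 + 2 * e) (by omega) le_rfl
  rw [sum_Icc_one_eq_add_mul_of_eq_on_Ioc h₁ (v := 6) fun i hi hi' => by
    rw [slackCounterexample, if_neg (by omega), if_neg (by omega), if_pos (by omega)]]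
  omega

lemma sum_Icc_total (hu : 2 ≤ u) :
    ∑ i ∈ Icc 1 (4 * u + 1 + 2 * e), slackCounterexample u e i = 3 * (4 * u + 1 + 2 * e) := by
  have := sum_Icc_of_le_sixes (u := u) (e := e) (j := 4 * u + 2 * e) (by omega) le_rfl
  rw [sum_Icc_one_eq_add_mul_of_eq_on_Ioc (c := 4 * u + 2 * e) (by omega) (v := 9 + e)
      fun i hi _ => by
        rw [slackCounterexample, if_neg (by omega), if_neg (by omega), if_neg (by omega)],
    show 4 * u + 1 + 2 * e - (4 * u + 2 * e) = 1 by omega]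
  omega

lemma isAscPartition (hu : 2 ≤ u) :
    IsAscPartition (3 * (4 * u + 1 + 2 * e)) (4 * u + 1 + 2 * e) (slackCounterexample u e) := by
  refine ⟨fun i _ _ => ?_, fun i j _ hij _ => ?_, sum_Icc_total hu⟩ <;>
  · simp only [slackCounterexample]
    split_ifs <;> omega

lemma slack_nonneg_of_le_pairs (hj : j ≤ 3 * u + e) :
    0 ≤ slack (3 * (4 * u + 1 + 2 * e)) (4 * u + 1 + 2 * e) (slackCounterexample u e) j := by
  refine slack_nonneg_of_le (S := 2 * j) (by rw [sum_Icc_of_le_pairs hj]; push_cast; ring) ?_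
  rw [sNK_eq]
  have hJ : (j : ℤ) ≤ 3 * u + e := by exact_mod_cast hj
  push_cast
  nlinarith [mul_nonneg (Int.natCast_nonneg j) (Int.natCast_nonneg e)]

lemma slack_nonneg_of_le_triples (he : e ≤ 1) (hu : 3 ≤ u) (h₁ : 3 * u + e ≤ j)
    (h₂ : j ≤ 3 * u + 2 + 2 * e) :
    0 ≤ slack (3 * (4 * u + 1 + 2 * e)) (4 * u + 1 + 2 * e) (slackCounterexample u e) j := by
  refine slack_nonneg_of_le (S := 3 * j - (3 * u + e))
    (by have := sum_Icc_of_le_triples h₁ h₂; omega) ?_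
  rw [sNK_eq]
  have hU : (3 : ℤ) ≤ u := by exact_mod_cast hu
  have hJ₁ : (3 * u + e : ℤ) ≤ j := by exact_mod_cast h₁
  have hJ₂ : (j : ℤ) ≤ 3 * u + 2 + 2 * e := by exact_mod_cast h₂
  push_cast
  rcases (by omega : (e : ℤ) = 0 ∨ (e : ℤ) = 1) with hE | hE <;> rw [hE] at hJ₁ hJ₂ ⊢ <;>
  nlinarith [mul_nonneg (sub_nonneg.mpr hJ₁) (sub_nonneg.mpr hJ₂)]

lemma slack_nonneg_of_le_sixes (he : e ≤ 1) (hu : 3 ≤ u) (h₁ : 3 * u + 2 + 2 * e ≤ j)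
    (h₂ : j ≤ 4 * u + 2 * e) :
    0 ≤ slack (3 * (4 * u + 1 + 2 * e)) (4 * u + 1 + 2 * e) (slackCounterexample u e) j := by
  refine slack_nonneg_of_le (S := 6 * j - (12 * u + 6 + 7 * e))
    (by have := sum_Icc_of_le_sixes h₁ h₂; omega) ?_
  rw [sNK_eq]
  have hU : (3 : ℤ) ≤ u := by exact_mod_cast hu
  have hJ₁ : (3 * u + 2 + 2 * e : ℤ) ≤ j := by exact_mod_cast h₁
  have hJ₂ : (j : ℤ) ≤ 4 * u + 2 * e := by exact_mod_cast h₂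
  push_cast
  rcases (by omega : (e : ℤ) = 0 ∨ (e : ℤ) = 1) with hE | hE <;> rw [hE] at hJ₁ hJ₂ ⊢ <;>
  nlinarith [mul_nonneg (sub_nonneg.mpr hJ₁) (sub_nonneg.mpr hJ₂),
    mul_nonneg (sub_nonneg.mpr hU) (sub_nonneg.mpr hJ₁),
    mul_nonneg (sub_nonneg.mpr hU) (sub_nonneg.mpr hJ₂)]

lemma slack_nonneg (he : e ≤ 1) (hu : 3 ≤ u) (hj : j ≤ 4 * u + 2 * e) :
    0 ≤ slack (3 * (4 * u + 1 + 2 * e)) (4 * u + 1 + 2 * e) (slackCounterexample u e) j := by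
  rcases le_total j (3 * u + e) with h | h₁
  · exact slack_nonneg_of_le_pairs h
  rcases le_total j (3 * u + 2 + 2 * e) with h₂ | h₂
  · exact slack_nonneg_of_le_triples he hu h₁ h₂
  · exact slack_nonneg_of_le_sixes he hu h₂ hj

lemma not_equitable (hu : 1 ≤ u) :
    ¬ Equitable (3 * (4 * u + 1 + 2 * e)) (4 * u + 1 + 2 * e) (slackCounterexample u e) := by
  refine not_equitable_of_many_pairs_and_triples (a := 3 * u + e) (b := 2 + e) (by omega)
    (fun i _ hi => if_pos hi) (fun i h₁ h₂ => ?_) ?_ ?_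
  · rw [slackCounterexample, if_neg (by omega), if_pos (by omega)]
  all_goals rw [sNK_eq]; omega

end slackCounterexample

theorem statement15 (k : ℕ) (hk : Odd k) (hk13 : 13 ≤ k) :
    ∃ p : ℕ → ℕ,
      IsAscPartition (3 * k) k p ∧
      (∀ j, 1 ≤ j → j ≤ k - 1 → 0 ≤ slack (3 * k) k p j) ∧
      ¬ Equitable (3 * k) k p := by
  obtain ⟨u, e, he, hu, rfl⟩ : ∃ u e, e ≤ 1 ∧ 3 ≤ u ∧ k = 4 * u + 1 + 2 * e := by
    obtain ⟨m, rfl⟩ := hk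
    exact ⟨m / 2, m % 2, by omega, by omega, by omega⟩
  exact ⟨slackCounterexample u e, slackCounterexample.isAscPartition (by omega),
    fun j _ hj => slackCounterexample.slack_nonneg he hu (by omega),
    slackCounterexample.not_equitable (by omega)⟩
end
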